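/- The function ψ(x) = -(x/2)√(1-x²) satisfies A[ψ](x) = x for every x ∈ (-1,1), where A is the Hadamard finite-part operator; i.e., A⁻¹[y](x) = -(x/2)√(1-x²). -/

import Mathlib

/-!
For fixed `x`, the integrand `y ↦ ψ(y) / (x - y)²` has an explicit primitive `F` on
`[-1, 1] \ {x}`. Its terms that are singular at `y = x` are a multiple of `log |x - y|`, which
takes the same value at `x ∓ δ` and so cancels between the two one-sided integrals, and
`-(x / 2) √(1 - y²) / (x - y)`, whose contribution to `F(x - δ) - F(x + δ)` is `2ψ(x) / δ`
plus difference quotients of `√(1 - y²)` at `x` that cancel in the limit because this function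
is differentiable at `x`. The rest of `F` is continuous at `x`, and the boundary values give
`F(1) - F(-1) = π x`.
-/

open Real Filter MeasureTheory Topology

section SymmetricDifferences

variable {G E : Type*} [TopologicalSpace G] [AddGroup G] [IsTopologicalAddGroup G]

theorem tendsto_const_add_nhdsNE (x : G) :
    Tendsto (fun h => x + h) (𝓝[≠] 0) (𝓝[≠] x) := by
  refine tendsto_nhdsWithin_of_tendsto_nhds_of_eventually_within _ ?_ ?_
  · exact ((continuous_const_add x).tendsto' 0 x (add_zero x)).mono_left nhdsWithin_le_nhds
  · filter_upwards [self_mem_nhdsWithin] with h hh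
    simpa using hh

theorem tendsto_const_sub_nhdsNE (x : G) :
    Tendsto (fun h => x - h) (𝓝[≠] 0) (𝓝[≠] x) := by
  refine tendsto_nhdsWithin_of_tendsto_nhds_of_eventually_within _ ?_ ?_
  · exact ((continuous_sub_left x).tendsto' 0 x (sub_zero x)).mono_left nhdsWithin_le_nhds
  · filter_upwards [self_mem_nhdsWithin] with h hh
    simpa using hh

theorem ContinuousAt.tendsto_sub_sub_add [TopologicalSpace E] [AddGroup E] [ContinuousSub E]
    {g : G → E} {x : G} (hg : ContinuousAt g x) :
    Tendsto (fun h => g (x - h) - g (x + h)) (𝓝 0) (𝓝 0) := by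
  have hsub : Tendsto (fun h => x - h) (𝓝 0) (𝓝 x) := by
    simpa using (continuous_sub_left x).tendsto 0
  have hadd : Tendsto (fun h => x + h) (𝓝 0) (𝓝 x) := by
    simpa using (continuous_const_add x).tendsto 0
  simpa using (hg.tendsto.comp hsub).sub (hg.tendsto.comp hadd)

end SymmetricDifferences

theorem HasDerivAt.tendsto_slope_add_sub_slope_sub {𝕜 E : Type*} [NontriviallyNormedField 𝕜]
    [NormedAddCommGroup E] [NormedSpace 𝕜 E] {f : 𝕜 → E} {f' : E} {x : 𝕜}
    (hf : HasDerivAt f f' x) :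
    Tendsto (fun h => slope f x (x + h) - slope f x (x - h)) (𝓝[≠] 0) (𝓝 0) := by
  have hslope := hasDerivAt_iff_tendsto_slope.1 hf
  simpa using (hslope.comp (tendsto_const_add_nhdsNE x)).sub
    (hslope.comp (tendsto_const_sub_nhdsNE x))

theorem hasDerivAt_sqrt_one_sub_sq {y : ℝ} (hy : y ∈ Set.Ioo (-1 : ℝ) 1) :
    HasDerivAt (fun t => √(1 - t ^ 2)) (-y / √(1 - y ^ 2)) y := by
  have hpos : 0 < 1 - y ^ 2 := by nlinarith [hy.1, hy.2]
  convert ((hasDerivAt_pow 2 y).const_sub 1).sqrt hpos.ne' using 1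
  field_simp
  ring

theorem hasDerivAt_log_sub_log {x y : ℝ} (hx : x ∈ Set.Ioo (-1 : ℝ) 1)
    (hy : y ∈ Set.Ioo (-1 : ℝ) 1) (hxy : y ≠ x) :
    HasDerivAt (fun t => log (1 - x * t + √(1 - x ^ 2) * √(1 - t ^ 2)) - log (x - t))
      (√(1 - x ^ 2) / ((x - y) * √(1 - y ^ 2))) y := by
  have hx2 : 0 < 1 - x ^ 2 := by nlinarith [hx.1, hx.2]
  have hy2 : 0 < 1 - y ^ 2 := by nlinarith [hy.1, hy.2]
  have hs := sqrt_pos.2 hx2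
  have hS := sqrt_pos.2 hy2
  have hxy' : x - y ≠ 0 := sub_ne_zero.2 hxy.symm
  have hQ : 0 < 1 - x * y + √(1 - x ^ 2) * √(1 - y ^ 2) := by
    nlinarith [mul_pos hs hS, sq_sqrt hx2.le, sq_sqrt hy2.le,
      sq_nonneg (√(1 - x ^ 2) - √(1 - y ^ 2))]
  have hQd : HasDerivAt (fun t => 1 - x * t + √(1 - x ^ 2) * √(1 - t ^ 2))
      (-x + √(1 - x ^ 2) * (-y / √(1 - y ^ 2))) y := by
    refine HasDerivAt.add ?_ ((hasDerivAt_sqrt_one_sub_sq hy).const_mul _)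
    simpa using ((hasDerivAt_id y).const_mul x).const_sub 1
  have hsub : HasDerivAt (fun t => x - t) (-1) y := by simpa using (hasDerivAt_id y).const_sub x
  refine ((hQd.log hQ.ne').sub (hsub.log hxy')).congr_deriv ?_
  field_simp
  linear_combination √(1 - x ^ 2) * sq_sqrt hy2.le - √(1 - y ^ 2) * sq_sqrt hx2.le

noncomputable def logCoeff (x : ℝ) : ℝ := (1 - 2 * x ^ 2) / (2 * √(1 - x ^ 2))

noncomputable def hadamardPrimitiveReg (x y : ℝ) : ℝ :=
  logCoeff x * log (1 - x * y + √(1 - x ^ 2) * √(1 - y ^ 2)) + x * arcsin y - √(1 - y ^ 2) / 2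

noncomputable def hadamardPrimitive (x y : ℝ) : ℝ :=
  hadamardPrimitiveReg x y - logCoeff x * log (x - y) - x / 2 * (√(1 - y ^ 2) / (x - y))

theorem hasDerivAt_hadamardPrimitive {x y : ℝ} (hx : x ∈ Set.Ioo (-1 : ℝ) 1)
    (hy : y ∈ Set.Ioo (-1 : ℝ) 1) (hxy : y ≠ x) :
    HasDerivAt (hadamardPrimitive x) (-(y / 2) * √(1 - y ^ 2) / (x - y) ^ 2) y := by
  have hx2 : 0 < 1 - x ^ 2 := by nlinarith [hx.1, hx.2]
  have hy2 : 0 < 1 - y ^ 2 := by nlinarith [hy.1, hy.2]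
  have hs := sqrt_pos.2 hx2
  have hxy' : x - y ≠ 0 := sub_ne_zero.2 hxy.symm
  have hsqrt := hasDerivAt_sqrt_one_sub_sq hy
  have hsub : HasDerivAt (fun t => x - t) (-1) y := by simpa using (hasDerivAt_id y).const_sub x
  have hF : hadamardPrimitive x = fun t =>
      logCoeff x * (log (1 - x * t + √(1 - x ^ 2) * √(1 - t ^ 2)) - log (x - t))
        + x * arcsin t - √(1 - t ^ 2) / 2 - x / 2 * (√(1 - t ^ 2) / (x - t)) := by
    funext t
    simp only [hadamardPrimitive, hadamardPrimitiveReg]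
    ring
  rw [hF]
  refine ((((hasDerivAt_log_sub_log hx hy hxy).const_mul _).add
    ((hasDerivAt_arcsin hy.1.ne' hy.2.ne).const_mul x)).sub (hsqrt.div_const 2)).sub
    ((hsqrt.div hsub hxy').const_mul _) |>.congr_deriv ?_
  simp only [logCoeff]
  field_simp
  linear_combination (y - x) * sq_sqrt hy2.le

theorem continuousAt_hadamardPrimitiveReg {x y : ℝ} (hx : x ∈ Set.Ioo (-1 : ℝ) 1)
    (hy : y ∈ Set.Icc (-1 : ℝ) 1) : ContinuousAt (hadamardPrimitiveReg x) y := by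
  have hQ : 0 < 1 - x * y + √(1 - x ^ 2) * √(1 - y ^ 2) := by
    nlinarith [mul_nonneg (sqrt_nonneg (1 - x ^ 2)) (sqrt_nonneg (1 - y ^ 2)), sq_nonneg (x - y),
      mul_pos (neg_lt_iff_pos_add'.1 hx.1) (sub_pos.2 hx.2),
      mul_nonneg (neg_le_iff_add_nonneg'.1 hy.1) (sub_nonneg.2 hy.2)]
  unfold hadamardPrimitiveReg
  have := continuous_arcsin.continuousAt (x := y)
  fun_prop (disch := exact hQ.ne')

theorem continuousAt_hadamardPrimitive {x y : ℝ} (hx : x ∈ Set.Ioo (-1 : ℝ) 1)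
    (hy : y ∈ Set.Icc (-1 : ℝ) 1) (hxy : y ≠ x) : ContinuousAt (hadamardPrimitive x) y := by
  have hxy' : x - y ≠ 0 := sub_ne_zero.2 hxy.symm
  have := continuousAt_hadamardPrimitiveReg hx hy
  unfold hadamardPrimitive
  fun_prop (disch := exact hxy')

theorem integral_eq_hadamardPrimitive_sub {x a b : ℝ} (hx : x ∈ Set.Ioo (-1 : ℝ) 1)
    (hab : a ≤ b) (ha : -1 ≤ a) (hb : b ≤ 1) (hxab : x ∉ Set.Icc a b) :
    ∫ y in a..b, -(y / 2) * √(1 - y ^ 2) / (x - y) ^ 2 =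
      hadamardPrimitive x b - hadamardPrimitive x a := by
  have hne : ∀ y ∈ Set.Icc a b, y ≠ x := fun y hy h => hxab (h ▸ hy)
  refine intervalIntegral.integral_eq_sub_of_hasDeriv_right_of_le hab
    (fun y hy => (continuousAt_hadamardPrimitive hx ⟨ha.trans hy.1, hy.2.trans hb⟩
      (hne y hy)).continuousWithinAt)
    (fun y hy => (hasDerivAt_hadamardPrimitive hx ⟨ha.trans_lt hy.1, hy.2.trans_le hb⟩
      (hne y (Set.Ioo_subset_Icc_self hy))).hasDerivWithinAt) ?_
  refine (ContinuousOn.intervalIntegrable_of_Icc hab fun y hy => ?_)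
  have hxy : (x - y) ^ 2 ≠ 0 := pow_ne_zero 2 (sub_ne_zero.2 (hne y hy).symm)
  exact ContinuousAt.continuousWithinAt (by fun_prop (disch := exact hxy))

theorem hadamardPrimitive_one_sub_neg_one (x : ℝ) :
    hadamardPrimitive x 1 - hadamardPrimitive x (-1) = π * x := by
  have hlog : log (x - 1) = log (1 - x) := by rw [← log_neg_eq_log, neg_sub]
  simp only [hadamardPrimitive, hadamardPrimitiveReg, arcsin_one, arcsin_neg_one, hlog]
  norm_num [add_comm x 1]
  ring

theorem hadamardPrimitive_sub_sub_div {x δ : ℝ} (hδ : δ ≠ 0) :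
    hadamardPrimitive x (x - δ) - hadamardPrimitive x (x + δ)
        - 2 * (-(x / 2) * √(1 - x ^ 2)) / δ =
      hadamardPrimitiveReg x (x - δ) - hadamardPrimitiveReg x (x + δ)
        - x / 2 * (slope (fun t => √(1 - t ^ 2)) x (x + δ)
          - slope (fun t => √(1 - t ^ 2)) x (x - δ)) := by
  simp only [hadamardPrimitive, slope_def_field, sub_sub_cancel, sub_add_cancel_left,
    add_sub_cancel_left, sub_sub_cancel_left, log_neg_eq_log]
  field_simp
  ring

theorem integral_add_integral_sub_div {x δ : ℝ} (hx : x ∈ Set.Ioo (-1 : ℝ) 1) (hδ : 0 < δ)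
    (hδl : δ < 1 + x) (hδr : δ < 1 - x) :
    (∫ y in (-1 : ℝ)..(x - δ), -(y / 2) * √(1 - y ^ 2) / (x - y) ^ 2) +
        (∫ y in (x + δ)..(1 : ℝ), -(y / 2) * √(1 - y ^ 2) / (x - y) ^ 2)
          - 2 * (-(x / 2) * √(1 - x ^ 2)) / δ =
      π * x + (hadamardPrimitiveReg x (x - δ) - hadamardPrimitiveReg x (x + δ)
        - x / 2 * (slope (fun t => √(1 - t ^ 2)) x (x + δ)
          - slope (fun t => √(1 - t ^ 2)) x (x - δ))) := by
  rw [integral_eq_hadamardPrimitive_sub hx (by linarith) le_rfl (by linarith)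
      (fun h => by linarith [h.2]),
    integral_eq_hadamardPrimitive_sub hx (by linarith) (by linarith) le_rfl
      (fun h => by linarith [h.1]),
    ← hadamardPrimitive_sub_sub_div hδ.ne', ← hadamardPrimitive_one_sub_neg_one]
  ring

theorem hadamard_of_neg_half_x_sqrt (x : ℝ) (hx : x ∈ Set.Ioo (-1 : ℝ) 1) :
    Tendsto
      (fun δ : ℝ =>
        (1 / π) * ((∫ y in (-1 : ℝ)..(x - δ), -(y / 2) * Real.sqrt (1 - y ^ 2) / (x - y) ^ 2) +
          (∫ y in (x + δ)..(1 : ℝ), -(y / 2) * Real.sqrt (1 - y ^ 2) / (x - y) ^ 2) -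
            2 * (-(x / 2) * Real.sqrt (1 - x ^ 2)) / δ))
      (nhdsWithin 0 (Set.Ioi 0)) (nhds x) := by
  have hreg : Tendsto (fun δ => hadamardPrimitiveReg x (x - δ) - hadamardPrimitiveReg x (x + δ))
      (𝓝[>] 0) (𝓝 0) :=
    (continuousAt_hadamardPrimitiveReg hx (Set.Ioo_subset_Icc_self hx)).tendsto_sub_sub_add
      |>.mono_left nhdsWithin_le_nhds
  have hsing := ((hasDerivAt_sqrt_one_sub_sq hx).tendsto_slope_add_sub_slope_sub.mono_left
    (nhdsGT_le_nhdsNE 0)).const_mul (x / 2)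
  have hlim := ((hreg.sub hsing).const_add (π * x)).const_mul (1 / π)
  rw [mul_zero, sub_zero, add_zero, one_div_mul_eq_div, mul_div_cancel_left₀ x pi_ne_zero] at hlim
  refine hlim.congr' ?_
  filter_upwards [Ioo_mem_nhdsGT (lt_min (neg_lt_iff_pos_add'.1 hx.1) (sub_pos.2 hx.2))]
    with δ ⟨hδ, hδm⟩
  rw [integral_add_integral_sub_div hx hδ (hδm.trans_le (min_le_left _ _))
    (hδm.trans_le (min_le_right _ _))]
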